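/- arXiv:1102.2169 — 2 statements merged into one kernel-verified Lean document; each statement's English description precedes it below -/
import Mathlib

section
/- π₁ of the orientation-preserving diffeomorphism group of the torus T² = S¹ × S¹ is isomorphic to ℤ × ℤ, generated by the loops of rotations in each circle factor; in particular there exist nontrivial elements, so gluing F × D² into a 4-manifold along a torus fiber F can be done in essentially different ways (logarithmic transforms). -/
/-!
STATEMENT 10: `π₁` of the diffeomorphism group of the torus `T² = S¹ × S¹` is
`ℤ × ℤ`, generated by the loops of rotations in the two circle factors
(Earle–Eells: `Diff₊(T²)` deformation retracts onto the translations `T²`).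
We formalize: `π₁(T²) ≅ ℤ × ℤ`, and the translation action `T² → Diff(T²)`
induces an injection of `π₁(T²)` into `π₁(Diff(T²))`; in particular nontrivial
regluing loops (logarithmic transforms) exist.
-/

open CategoryTheory
open scoped FundamentalGroupoid Manifold

/-- The homomorphism induced by a continuous map on fundamental groups. -/
noncomputable def π₁map {X Y : TopCat} (f : X ⟶ Y) (x : X) :
    FundamentalGroup X x →* FundamentalGroup Y (f x) :=
  (πₘ f).mapEnd ⟨x⟩

/-- The torus. -/
abbrev Torus : Type := Circle × Circle

/-- The diffeomorphism group of the torus, topologized as a subspace of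
`C(T², T²)` with the compact-open topology. -/
def DiffTorus : Type :=
  {f : C(Torus, Torus) //
    ∃ e : Diffeomorph ((𝓡 1).prod (𝓡 1)) ((𝓡 1).prod (𝓡 1)) Torus Torus (⊤ : ℕ∞), ⇑e = ⇑f}

noncomputable instance : TopologicalSpace DiffTorus := instTopologicalSpaceSubtype

/-- Left translation of the torus by `t`, as a diffeomorphism. -/
noncomputable def torusTranslate (t : Torus) :
    Diffeomorph ((𝓡 1).prod (𝓡 1)) ((𝓡 1).prod (𝓡 1)) Torus Torus (⊤ : ℕ∞) where
  toEquiv := Equiv.mulLeft t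
  contMDiff_toFun := contMDiff_mul_left
  contMDiff_invFun := contMDiff_mul_left

/-- The translation action of the torus on itself, as a continuous map into its
diffeomorphism group. -/
noncomputable def transMap : C(Torus, DiffTorus) where
  toFun t := ⟨(ContinuousMap.mk (fun p : Torus × Torus => p.1 * p.2)
      continuous_mul).curry t, torusTranslate t, rfl⟩
  continuous_toFun := by
    exact Continuous.subtype_mk (ContinuousMap.continuous _) _

/-!
`ℝ → S¹, t ↦ exp(it)` is a covering by a simply connected space with deck group `2πℤ ≅ ℤ`,
so `π₁(S¹) ≅ ℤ`, and `π₁` of a product is the product of the `π₁`'s. Evaluation at `1`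
is a left inverse of the translation action `T² → Diff(T²)`, so it induces an injection on `π₁`.
-/

namespace FundamentalGroup

variable {A B : Type*} [TopologicalSpace A] [TopologicalSpace B]

noncomputable def prodEquiv (a : A) (b : B) :
    FundamentalGroup (A × B) (a, b) ≃* FundamentalGroup A a × FundamentalGroup B b where
  toFun p := (map ⟨Prod.fst, continuous_fst⟩ (a, b) p, map ⟨Prod.snd, continuous_snd⟩ (a, b) p)
  invFun q := fromPath (Path.Homotopic.prod (toPath q.1) (toPath q.2))
  left_inv p := Path.Homotopic.prod_projLeft_projRight (toPath p)
  right_inv q := Prod.ext (Path.Homotopic.projLeft_prod _ _) (Path.Homotopic.projRight_prod _ _)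
  map_mul' p q := by simp only [map_mul, Prod.mk_mul_mk]

end FundamentalGroup

noncomputable def AddSubgroup.intEquivZMultiples {A : Type*} [AddCommGroup A] [IsAddTorsionFree A]
    {a : A} (ha : a ≠ 0) : ℤ ≃+ zmultiples a :=
  (AddMonoidHom.ofInjective (f := zmultiplesHom A a) (smul_left_injective ℤ ha)).trans
    (AddEquiv.addSubgroupCongr (range_zmultiplesHom a))

noncomputable def Circle.fundamentalGroupEquivInt :
    FundamentalGroup Circle 1 ≃* Multiplicative ℤ :=
  (isAddQuotientCoveringMap_exp.fundamentalGroupEquiv ⟨0, by simp⟩).trans <|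
    MulOpposite.opMulEquiv.symm.trans
      (AddSubgroup.intEquivZMultiples (by positivity : 2 * Real.pi ≠ 0)).symm.toMultiplicative

noncomputable def Torus.fundamentalGroupEquiv :
    FundamentalGroup Torus 1 ≃* Multiplicative (ℤ × ℤ) :=
  (FundamentalGroup.prodEquiv 1 1).trans <|
    (Circle.fundamentalGroupEquivInt.prodCongr Circle.fundamentalGroupEquivInt).trans
      (MulEquiv.prodMultiplicative ℤ ℤ).symm

theorem π₁map_injective_of_comp_eq_id {X Y : TopCat} {f : X ⟶ Y} {g : Y ⟶ X}
    (h : f ≫ g = 𝟙 X) (x : X) : Function.Injective (π₁map f x) := by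
  intro a b hab
  have hπ : πₘ f ≫ πₘ g = 𝟭 _ := by
    rw [← CategoryTheory.Functor.map_comp, h, CategoryTheory.Functor.map_id]
    rfl
  have hab' := congrArg (π₁map g (f x)) hab
  change (πₘ f ≫ πₘ g).mapEnd ⟨x⟩ a = (πₘ f ≫ πₘ g).mapEnd ⟨x⟩ b at hab'
  rwa [hπ] at hab'

noncomputable def DiffTorus.eval (p : Torus) : C(DiffTorus, Torus) :=
  ⟨fun f => f.1 p, (continuous_eval_const p).comp continuous_subtype_val⟩

theorem DiffTorus.eval_one_comp_transMap :
    (DiffTorus.eval 1).comp transMap = ContinuousMap.id Torus := by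
  ext1 t
  exact mul_one (M := Torus) t

theorem statement10 :
    Nonempty (FundamentalGroup Torus 1 ≃* Multiplicative (ℤ × ℤ)) ∧
    Function.Injective
      (π₁map (X := TopCat.of Torus) (Y := TopCat.of DiffTorus) (TopCat.ofHom transMap) (1 : Torus)) := by
  refine ⟨⟨Torus.fundamentalGroupEquiv⟩,
    π₁map_injective_of_comp_eq_id (g := TopCat.ofHom (DiffTorus.eval 1)) ?_ 1⟩
  rw [← TopCat.ofHom_comp, DiffTorus.eval_one_comp_transMap, TopCat.ofHom_id]
end

section
/- More generally, if p : X → Σ is a continuous surjection between path-connected, locally path-connected spaces such that every fiber p⁻¹(σ) is connected and p admits local sections (e.g., p is a proper submersion with connected fibers, or more simply a quotient map with connected fibers), then p_* : π₁(X) → π₁(Σ) is surjective. -/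
/-!
STATEMENT 14: If `p : X → Σ` is a quotient map between path-connected, locally
path-connected spaces, with `Σ` semilocally simply connected, and every fiber
`p⁻¹(σ)` is connected, then `p_* : π₁(X) → π₁(Σ)` is surjective.
-/

open CategoryTheory
open scoped FundamentalGroupoid

attribute [local instance] Path.Homotopic.setoid

/-- Semilocal simple connectivity: every point has a neighborhood in which all
loops at that point are null-homotopic in the ambient space. -/
def SemilocSimplyConnected (B : Type) [TopologicalSpace B] : Prop :=
  ∀ b : B, ∃ U ∈ nhds b, ∀ γ : Path b b, Set.range γ ⊆ U →
    FundamentalGroup.fromPath (X := TopCat.of B) ⟦γ⟧ = 1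

/-!
Semilocal simple connectivity gives every point of `Σ` a path-connected open neighbourhood `V`
in which any two paths with the same endpoints are homotopic in `Σ`. As `p` is a quotient map
with connected fibres, `p⁻¹ V` is connected, hence path-connected, so a path inside `V` is
homotopic to the image of a path joining any two prescribed points of the end fibres. Such
homotopy lifts concatenate, and by a connectedness argument on `[0, 1]` every path in `Σ` is,
up to homotopy, a concatenation of paths inside such neighbourhoods.
-/

open Set Topology

theorem Topology.IsQuotientMap.preconnectedSpace {X Y : Type*} [TopologicalSpace X]
    [TopologicalSpace Y] [PreconnectedSpace Y] {f : X → Y} (hf : IsQuotientMap f)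
    (hfib : ∀ y, IsPreconnected (f ⁻¹' {y})) : PreconnectedSpace X := by
  rw [preconnectedSpace_iff_clopen]
  intro C hC
  have hsat : f ⁻¹' (f '' C) = C := by
    refine (subset_preimage_image f C).antisymm' ?_
    rintro z ⟨c, hc, hcz⟩
    exact (hfib (f c)).subset_isClopen hC ⟨c, rfl, hc⟩ hcz.symm
  rcases isClopen_iff.mp (hf.isClopen_preimage.mp (hsat.symm ▸ hC)) with h | h
  · exact .inl (by rw [← hsat, h, preimage_empty])
  · exact .inr (by rw [← hsat, h, preimage_univ])

theorem Topology.IsQuotientMap.isPreconnected_preimage {X Y : Type*} [TopologicalSpace X]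
    [TopologicalSpace Y] {f : X → Y} (hf : IsQuotientMap f)
    (hfib : ∀ y, IsPreconnected (f ⁻¹' {y})) {V : Set Y} (hVo : IsOpen V)
    (hV : IsPreconnected V) : IsPreconnected (f ⁻¹' V) := by
  rw [isPreconnected_iff_preconnectedSpace] at hV ⊢
  refine (hf.restrictPreimage_isOpen hVo).preconnectedSpace fun y => ?_
  rw [← IsInducing.subtypeVal.isPreconnected_image]
  convert hfib y using 1
  ext x
  simp only [mem_image, mem_preimage, mem_singleton_iff, Subtype.ext_iff, restrictPreimage_coe]
  exact ⟨by rintro ⟨x, hx, rfl⟩; exact hx, fun hx => ⟨⟨x, show f x ∈ V from hx ▸ y.2⟩, hx, rfl⟩⟩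

theorem Topology.IsQuotientMap.isPathConnected_preimage {X Y : Type*} [TopologicalSpace X]
    [TopologicalSpace Y] [LocallyPathConnectedSpace X] {f : X → Y} (hf : IsQuotientMap f)
    (hfib : ∀ y, IsConnected (f ⁻¹' {y})) {V : Set Y} (hVo : IsOpen V) (hV : IsConnected V) :
    IsPathConnected (f ⁻¹' V) := by
  refine ((hVo.preimage hf.continuous).isConnected_iff_isPathConnected).mp ⟨?_, ?_⟩
  · obtain ⟨y, hy⟩ := hV.nonempty
    obtain ⟨x, hx⟩ := (hfib y).nonempty
    exact ⟨x, show f x ∈ V from (mem_singleton_iff.mp hx).symm ▸ hy⟩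
  · exact hf.isPreconnected_preimage (fun y => (hfib y).isPreconnected) hVo hV.isPreconnected

theorem IsPathConnected.homotopic_of_range_subset {B : Type*} [TopologicalSpace B]
    {V : Set B} {b : B} (hV : IsPathConnected V) (hb : b ∈ V)
    (hloops : ∀ γ : Path b b, range γ ⊆ V → γ.Homotopic (Path.refl b))
    {a a' : B} {η η' : Path a a'} (hη : range η ⊆ V) (hη' : range η' ⊆ V) :
    η.Homotopic η' := by
  have ha : a ∈ V := hη ⟨0, η.source⟩
  obtain ⟨α, hα⟩ := hV.joinedIn b hb a ha
  have hαV : range α ⊆ V := range_subset_iff.mpr hα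
  have hloop := hloops (α.trans ((η.trans η'.symm).trans α.symm)) (by
    simp only [Path.trans_range, Path.symm_range]
    exact union_subset hαV (union_subset (union_subset hη hη') hαV))
  rw [← Path.Homotopic.Quotient.eq] at hloop ⊢
  simp only [Path.Homotopic.Quotient.mk_trans, Path.Homotopic.Quotient.mk_symm,
    Path.Homotopic.Quotient.mk_refl] at hloop
  set q := Path.Homotopic.Quotient.mk α
  set u := Path.Homotopic.Quotient.mk η
  set v := Path.Homotopic.Quotient.mk η'
  have huv : u.trans v.symm = .refl a := calc
    u.trans v.symm = (q.symm.trans (q.trans ((u.trans v.symm).trans q.symm))).trans q := by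
      simp only [← Path.Homotopic.Quotient.trans_assoc, Path.Homotopic.Quotient.symm_trans,
        Path.Homotopic.Quotient.refl_trans]
      simp [Path.Homotopic.Quotient.trans_assoc]
    _ = .refl a := by rw [hloop]; simp
  calc u = (u.trans v.symm).trans v := by simp
    _ = v := by rw [huv]; simp

theorem SemilocSimplyConnected.exists_isOpen_homotopic {B : Type} [TopologicalSpace B]
    [LocallyPathConnectedSpace B] (h : SemilocSimplyConnected B) (b : B) :
    ∃ V, IsOpen V ∧ b ∈ V ∧ IsPathConnected V ∧
      ∀ {a a' : B} {η η' : Path a a'}, range η ⊆ V → range η' ⊆ V → η.Homotopic η' := by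
  obtain ⟨U, hU, hloops⟩ := h b
  obtain ⟨V, ⟨hVo, hbV, hV⟩, hVU⟩ := (isOpen_isPathConnected_basis b).mem_iff.mp hU
  exact ⟨V, hVo, hbV, hV, hV.homotopic_of_range_subset hbV fun γ hγ =>
    Path.Homotopic.Quotient.exact (hloops γ (hγ.trans hVU))⟩

open unitInterval in
theorem Path.induction_on_small {B : Type*} [TopologicalSpace B]
    (P : ∀ {a b : B}, Path a b → Prop)
    (homotopic : ∀ {a b : B} {β β' : Path a b}, β.Homotopic β' → P β → P β')
    (trans : ∀ {a b c : B} {β : Path a b} {β' : Path b c}, P β → P β' → P (β.trans β'))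
    (small : ∀ b, ∃ V ∈ 𝓝 b, ∀ {a a' : B} (β : Path a a'), range β ⊆ V → P β)
    {a b : B} (γ : Path a b) : P γ := by
  have := (convex_Icc (0 : ℝ) 1).locallyPathConnectedSpace
  have := (convex_Icc (0 : ℝ) 1).contractibleSpace (nonempty_Icc.2 zero_le_one)
  have hcast : ∀ {a' b' : B} (β : Path a' b') (ha : a = a') (hb : b = b'),
      P β → P (β.cast ha hb) := by
    rintro _ _ β rfl rfl hβ
    exact hβ
  -- `ρ₀.map γ` is `γ` with endpoints `γ 0`, `γ 1` in place of `a`, `b`.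
  let ρ₀ : Path (0 : I) 1 := ⟨ContinuousMap.id I, rfl, rfl⟩
  suffices ∃ ρ : Path (0 : I) 1, P (ρ.map γ.continuous) by
    obtain ⟨ρ, hρ⟩ := this
    exact hcast _ γ.source.symm γ.target.symm
      (homotopic ((SimplyConnectedSpace.paths_homotopic ρ ρ₀).map γ.toContinuousMap) hρ)
  -- The relation below on `I` is transitive and relates nearby points, so `I` being connected
  -- it relates `0` and `1`.
  refine PreconnectedSpace.induction₂' (fun s t => ∃ ρ : Path s t, P (ρ.map γ.continuous))
    (fun s => ?_) ⟨?_⟩ 0 1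
  · obtain ⟨V, hV, hPV⟩ := small (γ s)
    obtain ⟨W, ⟨hW, hWc⟩, hWV⟩ :=
      (path_connected_basis s).mem_iff.mp (γ.continuous.continuousAt.preimage_mem_nhds hV)
    have hmap : ∀ {u v : I} (τ : Path u v), (∀ r, τ r ∈ W) → P (τ.map γ.continuous) :=
      fun τ hτ => hPV _ (by rintro _ ⟨r, rfl⟩; exact hWV (hτ r))
    filter_upwards [hW] with t ht
    obtain ⟨ρ, hρ⟩ := hWc.joinedIn s (mem_of_mem_nhds hW) t ht
    exact ⟨⟨ρ, hmap ρ hρ⟩, ⟨ρ.symm, hmap ρ.symm fun r => hρ _⟩⟩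
  · rintro s t u ⟨ρ, hρ⟩ ⟨τ, hτ⟩
    exact ⟨ρ.trans τ, by rw [Path.map_trans]; exact trans hρ hτ⟩

section Lifting

variable {X B : Type*} [TopologicalSpace X] [TopologicalSpace B] (p : C(X, B))

def Path.IsLiftableUpToHomotopy {a b : B} (β : Path a b) : Prop :=
  ∀ (x y : X) (hx : p x = a) (hy : p y = b),
    ∃ D : Path x y, (D.map p.continuous).Homotopic (β.cast hx hy)

variable {p}

theorem Path.IsLiftableUpToHomotopy.of_homotopic {a b : B} {β β' : Path a b}
    (h : β.Homotopic β') (hβ : β.IsLiftableUpToHomotopy p) : β'.IsLiftableUpToHomotopy p := by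
  rintro x y rfl rfl
  obtain ⟨D, hD⟩ := hβ x y rfl rfl
  exact ⟨D, hD.trans h⟩

theorem Path.IsLiftableUpToHomotopy.trans (hp : Function.Surjective p) {a b c : B}
    {β : Path a b} {β' : Path b c} (hβ : β.IsLiftableUpToHomotopy p)
    (hβ' : β'.IsLiftableUpToHomotopy p) : (β.trans β').IsLiftableUpToHomotopy p := by
  rintro x z rfl rfl
  obtain ⟨y, rfl⟩ := hp b
  obtain ⟨D, hD⟩ := hβ x y rfl rfl
  obtain ⟨D', hD'⟩ := hβ' y z rfl rfl
  exact ⟨D.trans D', by rw [Path.map_trans]; exact hD.hcomp hD'⟩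

theorem Path.IsLiftableUpToHomotopy.of_range_subset {V : Set B}
    (hV : IsPathConnected (p ⁻¹' V))
    (hVh : ∀ {a a' : B} {η η' : Path a a'}, range η ⊆ V → range η' ⊆ V → η.Homotopic η')
    {a b : B} {β : Path a b} (hβ : range β ⊆ V) : β.IsLiftableUpToHomotopy p := by
  rintro x y rfl rfl
  obtain ⟨D, hD⟩ := hV.joinedIn x (hβ ⟨0, β.source⟩) y (hβ ⟨1, β.target⟩)
  exact ⟨D, hVh (by rintro _ ⟨t, rfl⟩; exact hD t) hβ⟩

end Lifting

theorem statement14_general {X B : Type} [TopologicalSpace X] [TopologicalSpace B]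
    [LocallyPathConnectedSpace X]
    [LocallyPathConnectedSpace B]
    (p : C(X, B)) (hq : Topology.IsQuotientMap p)
    (hsemi : SemilocSimplyConnected B)
    (hfib : ∀ b : B, IsConnected (p ⁻¹' {b}))
    (x₀ : X) :
    Function.Surjective (π₁map (X := TopCat.of X) (Y := TopCat.of B) (TopCat.ofHom p) x₀) := by
  intro g
  obtain ⟨γ, rfl⟩ := Path.Homotopic.Quotient.mk_surjective g
  have hγ : γ.IsLiftableUpToHomotopy p := by
    refine Path.induction_on_small _ (fun h hβ => hβ.of_homotopic h)
      (fun hβ hβ' => hβ.trans hq.surjective hβ') (fun b => ?_) γ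
    obtain ⟨V, hVo, hbV, hV, hVh⟩ := hsemi.exists_isOpen_homotopic b
    exact ⟨V, hVo.mem_nhds hbV, fun β hβ => .of_range_subset
      (hq.isPathConnected_preimage hfib hVo hV.isConnected) hVh hβ⟩
  obtain ⟨D, hD⟩ := hγ x₀ x₀ rfl rfl
  exact ⟨FundamentalGroup.fromPath ⟦D⟧, Quotient.sound hD⟩

theorem statement14 {X B : Type} [TopologicalSpace X] [TopologicalSpace B]
    [PathConnectedSpace X] [LocallyPathConnectedSpace X]
    [PathConnectedSpace B] [LocallyPathConnectedSpace B]
    (p : C(X, B)) (hq : Topology.IsQuotientMap p)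
    (hsemi : SemilocSimplyConnected B)
    (hfib : ∀ b : B, IsConnected (p ⁻¹' {b}))
    (x₀ : X) :
    Function.Surjective (π₁map (X := TopCat.of X) (Y := TopCat.of B) (TopCat.ofHom p) x₀) :=
  statement14_general p hq hsemi hfib x₀
end
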